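/- arXiv:2205.15631 — 2 statements merged into one kernel-verified Lean document; each statement's English description precedes it below -/
import Mathlib

section
/- Any deterministic finite automaton accepting the language E_{n,k} = { u b v : u,v ∈ {a,b}*, |v| = c·n^k − 1 for some c > 0 } has at least 2^{n^k} states. -/
/-! The `2 ^ N` words of length `N = n ^ k` form a fooling set. If `x ≠ y` differ at position `i`,
then `x a^i` and `y a^i` have length `< 2N`, and a word that short lies in `E_{n,k}` exactly when
its letter `N` places from the end, here the letter at position `i`, is `b`. So distinct words have
distinct left quotients of `E_{n,k}`, hence drive any DFA accepting it to distinct states. -/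

/-- The language `E_{n,k}` over the alphabet `{a,b}` (encoded as `Bool`, with
`a = false` and `b = true`): words `u b v` where `|v| = c·n^k − 1` for some `c > 0`. -/
def Enk (n k : ℕ) : Language Bool :=
  {w | ∃ (u v : List Bool) (c : ℕ), 0 < c ∧ w = u ++ [true] ++ v ∧
    v.length = c * n ^ k - 1}

theorem DFA.card_le_of_injective_leftQuotient {α σ ι : Type*} [Fintype σ] [Fintype ι]
    (M : DFA α σ) {f : ι → List α} (hf : Function.Injective (M.accepts.leftQuotient ∘ f)) :
    Fintype.card ι ≤ Fintype.card σ := by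
  rw [Language.leftQuotient_accepts] at hf
  exact Fintype.card_le_of_injective _ (hf.of_comp (f := M.acceptsFrom))

theorem List.take_append_getElem_append_drop {α : Type*} (l : List α) {i : ℕ}
    (hi : i < l.length) : l.take i ++ [l[i]] ++ l.drop (i + 1) = l := by
  rw [List.append_assoc, List.singleton_append, List.getElem_cons_drop, List.take_append_drop]

theorem mem_Enk_iff_of_length_lt {n k : ℕ} {w : List Bool} (hw : w.length < 2 * n ^ k) :
    w ∈ Enk n k ↔ ∃ h : n ^ k ≤ w.length, w[w.length - n ^ k] = true := by
  constructor
  · rintro ⟨u, v, c, hc, rfl, hv⟩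
    have hlen : (u ++ [true] ++ v).length = u.length + 1 + v.length := by
      simp only [List.length_append, List.length_singleton]
    -- `c * n ^ k ≤ |w| < 2 * n ^ k` forces `c = 1`.
    have hc1 : c = 1 := by
      by_contra hc1
      have : 2 * n ^ k ≤ c * n ^ k := Nat.mul_le_mul_right _ (by omega)
      omega
    subst hc1
    have hu : (u ++ [true] ++ v).length - n ^ k = u.length := by omega
    refine ⟨by omega, ?_⟩
    simp only [hu]
    simp
  · rintro ⟨hN, hb⟩
    refine ⟨w.take (w.length - n ^ k), w.drop (w.length - n ^ k + 1), 1, one_pos, ?_, ?_⟩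
    · rw [← hb, List.take_append_getElem_append_drop]
    · simp only [List.length_drop]
      omega

theorem replicate_mem_leftQuotient_Enk_iff {n k : ℕ} (g : Fin (n ^ k) → Bool) (i : Fin (n ^ k)) :
    List.replicate i false ∈ (Enk n k).leftQuotient (List.ofFn g) ↔ g i = true := by
  rw [Language.mem_leftQuotient, mem_Enk_iff_of_length_lt (by
    simp only [List.length_append, List.length_ofFn, List.length_replicate]; omega)]
  simp

theorem injective_leftQuotient_Enk_ofFn (n k : ℕ) :
    Function.Injective ((Enk n k).leftQuotient ∘ List.ofFn (n := n ^ k)) := by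
  intro g h hgh
  funext i
  rw [Bool.eq_iff_iff, ← replicate_mem_leftQuotient_Enk_iff, ← replicate_mem_leftQuotient_Enk_iff]
  exact Set.ext_iff.mp hgh _

theorem dfa_lower_bound_Enk_general (n k : ℕ)
    (σ : Type) [Fintype σ] (M : DFA Bool σ) (hM : M.accepts = Enk n k) :
    2 ^ (n ^ k) ≤ Fintype.card σ := by
  have h := M.card_le_of_injective_leftQuotient (hM ▸ injective_leftQuotient_Enk_ofFn n k)
  rwa [Fintype.card_fun, Fintype.card_bool, Fintype.card_fin] at h

theorem dfa_lower_bound_Enk (n k : ℕ) (hn : 1 < n) (hk : 0 < k)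
    (σ : Type) [Fintype σ] (M : DFA Bool σ) (hM : M.accepts = Enk n k) :
    2 ^ (n ^ k) ≤ Fintype.card σ :=
  dfa_lower_bound_Enk_general n k σ M hM
end

section
/- Any DFA accepting the block language B_k = { u₁#u₂#⋯#u_m : u_i ∈ {0,1}^k, m > 1, ∃ i < m with u_i = u_m } requires at least 2^{2^k} states. -/
/-!
Fooling set: to a set `S` of blocks associate the word listing the blocks of `S`. After that
word, the continuation `#u` leads into `B_k` exactly when `u ∈ S`, so the `2 ^ 2 ^ k` such words
have pairwise distinct left quotients of `B_k` and hence reach pairwise distinct states of any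
DFA accepting `B_k`. For `S = ∅` the word is empty, and `#u ∉ B_k` because `k ≥ 1`.
-/

/-- The block language `B_k` over the alphabet `{0,1,#}`, encoded as `Option Bool`
with `none = #` and `some b` a binary digit: `#`-separated blocks of length `k`
over `{0,1}`, at least two blocks, and the last block equals some earlier block. -/
def Bk (k : ℕ) : Language (Option Bool) :=
  {w | ∃ us : List (List Bool),
    2 ≤ us.length ∧ (∀ u ∈ us, u.length = k) ∧
    (∃ i < us.length - 1, us[i]? = us[us.length - 1]?) ∧
    w = List.intercalate [none] (us.map (List.map some))}

theorem List.intercalate_append_singleton {α : Type*} (ys l : List α) {zs : List (List α)}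
    (hzs : zs ≠ []) : ys.intercalate (zs ++ [l]) = ys.intercalate zs ++ ys ++ l := by
  induction zs with
  | nil => contradiction
  | cons z zs ih =>
    rcases eq_or_ne zs [] with rfl | hne
    · simp
    · rw [List.cons_append, List.intercalate_cons_of_ne_nil (by simp), ih hne,
        List.intercalate_cons_of_ne_nil hne]
      simp

theorem List.intercalate_singleton_injOn {α : Type*} [DecidableEq α] (x : α) :
    Set.InjOn [x].intercalate {ls | ls ≠ [] ∧ ∀ l ∈ ls, x ∉ l} := by
  rintro ls ⟨hls, hx⟩ ls' ⟨hls', hx'⟩ h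
  rw [← List.splitOn_intercalate x hx hls, ← List.splitOn_intercalate x hx' hls', h]

theorem List.mem_iff_exists_getElem?_eq_last {α : Type*} (l : List α) (a : α) :
    (∃ i < (l ++ [a]).length - 1, (l ++ [a])[i]? = (l ++ [a])[(l ++ [a]).length - 1]?) ↔
      a ∈ l := by
  simp only [List.length_append, List.length_singleton, Nat.add_sub_cancel,
    List.getElem?_concat_length, List.mem_iff_getElem?]
  constructor
  · rintro ⟨i, hi, h⟩
    exact ⟨i, by rwa [List.getElem?_append_left hi] at h⟩
  · rintro ⟨i, h⟩
    have hi : i < l.length := by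
      by_contra hi; simp [List.getElem?_eq_none (not_lt.mp hi)] at h
    exact ⟨i, hi, by rwa [List.getElem?_append_left hi]⟩

namespace Bk

variable {k : ℕ}

def joinBlocks (us : List (List Bool)) : List (Option Bool) :=
  [none].intercalate (us.map (List.map some))

theorem joinBlocks_injOn : Set.InjOn joinBlocks {us | us ≠ []} := by
  intro us hus us' hus' h
  refine List.map_injective_iff.mpr (List.map_injective_iff.mpr (Option.some_injective _)) ?_
  refine List.intercalate_singleton_injOn none ⟨by simpa using hus, ?_⟩
    ⟨by simpa using hus', ?_⟩ h <;> simp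

theorem joinBlocks_append_singleton {us : List (List Bool)} (hus : us ≠ []) (u : List Bool) :
    joinBlocks (us ++ [u]) = joinBlocks us ++ none :: u.map some := by
  simp [joinBlocks, List.intercalate_append_singleton _ _ (List.map_eq_nil_iff.not.mpr hus)]

theorem none_cons_notMem (hk : 1 ≤ k) (w : List (Option Bool)) : none :: w ∉ Bk k := by
  rintro ⟨(_ | ⟨(_ | ⟨_, _⟩), us⟩), hlen, hblocks, -, hw⟩
  · simp at hlen
  · exact absurd (hblocks [] List.mem_cons_self) (by simp; omega)
  · cases us <;> simp at hw

theorem joinBlocks_append_mem_iff {us : List (List Bool)} (hus : us ≠ [])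
    (hlen : ∀ v ∈ us, v.length = k) {u : List Bool} (hu : u.length = k) :
    joinBlocks us ++ none :: u.map some ∈ Bk k ↔ u ∈ us := by
  rw [← joinBlocks_append_singleton hus, ← List.mem_iff_exists_getElem?_eq_last]
  constructor
  · rintro ⟨vs, hvs, -, hlast, hw⟩
    rwa [joinBlocks_injOn (by simp) (by rintro rfl; simp at hvs) hw]
  · intro hlast
    refine ⟨us ++ [u], ?_, ?_, hlast, rfl⟩
    · simpa [Nat.one_le_iff_ne_zero] using hus
    · simpa [or_imp, forall_and] using ⟨hlen, hu⟩

noncomputable def finsetWord (S : Finset (List.Vector Bool k)) : List (Option Bool) :=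
  joinBlocks (S.toList.map List.Vector.toList)

theorem finsetWord_append_mem_iff (hk : 1 ≤ k) (S : Finset (List.Vector Bool k))
    (u : List.Vector Bool k) : finsetWord S ++ none :: u.toList.map some ∈ Bk k ↔ u ∈ S := by
  rcases S.eq_empty_or_nonempty with rfl | hS
  · simpa [finsetWord, joinBlocks] using none_cons_notMem hk _
  · rw [finsetWord,
      joinBlocks_append_mem_iff (by simpa using hS.ne_empty) (by simp) u.toList_length]
    simp [List.Vector.toList_injective.eq_iff]

theorem leftQuotient_finsetWord_injective (hk : 1 ≤ k) :
    Function.Injective fun S : Finset (List.Vector Bool k) =>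
      (Bk k).leftQuotient (finsetWord S) := by
  intro S T h
  ext u
  rw [← finsetWord_append_mem_iff hk, ← finsetWord_append_mem_iff hk,
    ← Language.mem_leftQuotient, ← Language.mem_leftQuotient]
  exact Set.ext_iff.mp h _

end Bk

theorem dfa_lower_bound_Bk (k : ℕ) (hk : 2 ≤ k)
    (σ : Type) [Fintype σ] (M : DFA (Option Bool) σ) (hM : M.accepts = Bk k) :
    2 ^ (2 ^ k) ≤ Fintype.card σ := by
  calc 2 ^ (2 ^ k) = Fintype.card (Finset (List.Vector Bool k)) := by
        rw [Fintype.card_finset, card_vector, Fintype.card_bool]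
    _ ≤ Fintype.card σ := M.card_le_of_injective_leftQuotient (f := Bk.finsetWord) <| by
        rw [hM]; exact Bk.leftQuotient_finsetWord_injective (by omega)
end
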